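/- For all integers n ≥ 1 and k ≥ 1, the dimension of the endomorphism algebra of the k-th tensor power of the standard representation of the dicyclic group of degree n is given by the closed formula dim_ℂ End_{Dic_n}(V^{⊗k}) = (2^{2k+1}/(4n)) · (1 + Σ_{m=1}^{n-1} cos^{2k}(mπ/n)), as an equality of real numbers. -/

import Mathlib

open scoped TensorProduct
open Matrix

noncomputable section

/-- `ℂ²`, the standard two-dimensional complex vector space. -/
abbrev V2 : Type := Fin 2 → ℂ

/-- The standard representation of a subgroup `G ≤ GL₂(ℂ)` on `ℂ²`, by matrix-vector
multiplication. -/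
def stdRep (G : Subgroup (GL (Fin 2) ℂ)) : Representation ℂ G V2 where
  toFun g := Matrix.toLin' ((g : GL (Fin 2) ℂ) : Matrix (Fin 2) (Fin 2) ℂ)
  map_one' := by
    simp only [OneMemClass.coe_one, Units.val_one, Matrix.toLin'_one]
    rfl
  map_mul' g h := by
    simp only [MulMemClass.coe_mul, Units.val_mul, Matrix.toLin'_mul]
    rfl

/-- `TPow j` is the `(j+1)`-st tensor power `V^{⊗(j+1)}` of `V = ℂ²`, realized as an
iterated binary tensor product (bundled as an object of `ModuleCat ℂ` so that the
recursion carries its module structure). -/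
def TPow : ℕ → ModuleCat ℂ
  | 0 => ModuleCat.of ℂ V2
  | (j + 1) => ModuleCat.of ℂ (TPow j ⊗[ℂ] V2)

/-- The diagonal representation of `G ≤ GL₂(ℂ)` on `TPow j = V^{⊗(j+1)}`. -/
def TPowRep (G : Subgroup (GL (Fin 2) ℂ)) : (j : ℕ) → Representation ℂ G (TPow j)
  | 0 => stdRep G
  | (j + 1) => (TPowRep G j).tprod (stdRep G)

/-- The basis vector `v_s^{⊗(j+1)}` of `TPow j = V^{⊗(j+1)}`, for `s : Fin 2`. -/
def vpow (s : Fin 2) : (j : ℕ) → TPow j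
  | 0 => Pi.single s 1
  | (j + 1) => vpow s j ⊗ₜ[ℂ] Pi.single s 1

/-- The subspace `V_{j+1}` of `V^{⊗(j+1)}` spanned by `v₁^{⊗(j+1)}` and `v₂^{⊗(j+1)}`. -/
def Vsub (j : ℕ) : Submodule ℂ (TPow j) := Submodule.span ℂ {vpow 0 j, vpow 1 j}

/-- The space `End_G(W)` of `G`-equivariant linear endomorphisms of a representation `W`. -/
def equivEnd {G W : Type*} [Group G] [AddCommGroup W] [Module ℂ W]
    (ρ : Representation ℂ G W) : Submodule ℂ (W →ₗ[ℂ] W) where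
  carrier := {f | ∀ g : G, f ∘ₗ ρ g = ρ g ∘ₗ f}
  add_mem' := by
    intro f h hf hh g
    simp only [LinearMap.add_comp, LinearMap.comp_add, hf g, hh g]
  zero_mem' := by
    intro g
    simp only [LinearMap.zero_comp, LinearMap.comp_zero]
  smul_mem' := by
    intro c f hf g
    simp only [LinearMap.smul_comp, LinearMap.comp_smul, hf g]


/-!
In the basis `e₀, i • e₁` of `ℂ²` the generator `A` is diagonal with eigenvalues `ζ, ζ⁻¹`,
`ζ = exp (π i / n)`, and `X` is `-i` times the swap of the two vectors. Hence in the tensor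
basis of `V^{⊗k}`, indexed by words `p` in `{0, 1}^k`, `A` is diagonal with eigenvalues
`μ p = ζ^(#0 - #1)` and `X` is a scalar times the permutation `p ↦ p̄` flipping every letter.
A matrix commutes with both iff it is supported on the pairs with `μ p = μ q` and invariant
under `(p, q) ↦ (p̄, q̄)`; this involution has no fixed points, so the dimension is half the
number of such pairs. As the `μ p` are `2n`-th roots of unity, the roots-of-unity filter counts
these pairs as `(2n)⁻¹ ∑_{m < 2n} |∑_p μ p ^ m|² = (2n)⁻¹ ∑_{m < 2n} (2 cos (m π / n))^(2k)`, and
the terms for `m` and `m + n` agree.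
-/

open Module Function

theorem mem_equivEnd_iff_of_closure_eq_top {G W : Type*} [Group G] [AddCommGroup W]
    [Module ℂ W] (ρ : Representation ℂ G W) {S : Set G} (hS : Subgroup.closure S = ⊤)
    (f : W →ₗ[ℂ] W) : f ∈ equivEnd ρ ↔ ∀ g ∈ S, Commute f (ρ g) := by
  refine ⟨fun hf g _ => hf g, fun hgen g => ?_⟩
  have hg : g ∈ Subgroup.closure S := hS ▸ Subgroup.mem_top g
  show Commute f (ρ g)
  induction hg using Subgroup.closure_induction with
  | mem g hg => exact hgen g hg
  | one => simp
  | mul g h _ _ hg hh => simpa using hg.mul_right hh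
  | inv g _ hg =>
    have := (show Commute f (ρ.asGroupHom g) from hg).units_inv_right
    rwa [← map_inv, Representation.asGroupHom_apply] at this

theorem mem_equivEnd_closure_pair_iff {G W : Type*} [Group G] [AddCommGroup W] [Module ℂ W]
    {x y : G} (ρ : Representation ℂ (Subgroup.closure {x, y}) W) (f : W →ₗ[ℂ] W) :
    f ∈ equivEnd ρ ↔ Commute f (ρ ⟨x, Subgroup.subset_closure (by simp)⟩) ∧
      Commute f (ρ ⟨y, Subgroup.subset_closure (by simp)⟩) := by
  rw [mem_equivEnd_iff_of_closure_eq_top ρ Subgroup.closure_closure_coe_preimage]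
  refine ⟨fun h => ⟨h _ (by simp), h _ (by simp)⟩, ?_⟩
  rintro ⟨hx, hy⟩ ⟨g, _⟩ (rfl | rfl : g = x ∨ g = y)
  exacts [hx, hy]

section MonomialMatrix

variable {ι R : Type*} [Fintype ι] [DecidableEq ι] [CommRing R]

def monomialMatrix (τ : ι → ι) (c : ι → R) : Matrix ι ι R :=
  Matrix.of fun p q => if p = τ q then c q else 0

theorem LinearMap.toMatrixAlgEquiv_eq_monomialMatrix {W : Type*} [AddCommGroup W] [Module R W]
    (B : Basis ι R W) {f : W →ₗ[R] W} {τ : ι → ι} {c : ι → R}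
    (hf : ∀ q, f (B q) = c q • B (τ q)) :
    LinearMap.toMatrixAlgEquiv B f = monomialMatrix τ c := by
  ext p q
  simp [LinearMap.toMatrixAlgEquiv_apply, hf, monomialMatrix, Finsupp.single_apply, eq_comm]

theorem mul_monomialMatrix_apply (M : Matrix ι ι R) (τ : ι → ι) (c : ι → R) (p q : ι) :
    (M * monomialMatrix τ c) p q = M p (τ q) * c q := by
  simp [Matrix.mul_apply, monomialMatrix]

theorem monomialMatrix_mul_apply {τ : ι → ι} (hτ : Involutive τ) (c : ι → R)
    (M : Matrix ι ι R) (p q : ι) :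
    (monomialMatrix τ c * M) p q = c (τ p) * M (τ p) q := by
  have h : ∀ r, p = τ r ↔ r = τ p := fun r => by
    constructor <;> rintro rfl <;> simp [hτ _]
  simp [Matrix.mul_apply, monomialMatrix, h]

theorem commute_monomialMatrix_iff {τ : ι → ι} (hτ : Involutive τ) (c : ι → R)
    (M : Matrix ι ι R) :
    Commute M (monomialMatrix τ c) ↔ ∀ p q, M p (τ q) * c q = c (τ p) * M (τ p) q := by
  simp only [Commute, SemiconjBy, ← Matrix.ext_iff, mul_monomialMatrix_apply,
    monomialMatrix_mul_apply hτ]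

theorem commute_monomialMatrix_id_iff [IsDomain R] (c : ι → R) (M : Matrix ι ι R) :
    Commute M (monomialMatrix id c) ↔ ∀ p q, c p ≠ c q → M p q = 0 := by
  rw [commute_monomialMatrix_iff fun _ => rfl]
  refine forall₂_congr fun p q => ?_
  rw [← sub_eq_zero, id, id, mul_comm, ← sub_mul, mul_eq_zero, sub_eq_zero, or_iff_not_imp_left,
    eq_comm]

theorem commute_monomialMatrix_const_iff [IsDomain R] {τ : ι → ι} (hτ : Involutive τ) {a : R}
    (ha : a ≠ 0) (M : Matrix ι ι R) :
    Commute M (monomialMatrix τ fun _ => a) ↔ ∀ p q, M (τ p) (τ q) = M p q := by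
  rw [commute_monomialMatrix_iff hτ, hτ.surjective.forall]
  refine forall₂_congr fun p q => ?_
  rw [hτ p, mul_comm, mul_right_inj' ha]

end MonomialMatrix

section InvariantMatrices

variable {ι R : Type*} [Fintype ι] [Ring R] [StrongRankCondition R]
  {τ : ι → ι} {r : ι → ι → Prop} {half : ι → Prop}

theorem finrank_eq_natCard_of_mem_iff (hτ : Involutive τ)
    (hr : ∀ p q, r (τ p) (τ q) ↔ r p q) (hhalf : ∀ p, half (τ p) ↔ ¬ half p)
    {S : Submodule R (Matrix ι ι R)}
    (hS : ∀ M, M ∈ S ↔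
      (∀ p q, ¬ r p q → M p q = 0) ∧ ∀ p q, M (τ p) (τ q) = M p q) :
    finrank R S = Nat.card {x : ι × ι // r x.1 x.2 ∧ half x.1} := by
  classical
  let T := {x : ι × ι // r x.1 x.2 ∧ half x.1}
  let restrict : S →ₗ[R] T → R :=
    { toFun := fun M x => (M : Matrix ι ι R) x.1.1 x.1.2
      map_add' := fun _ _ => rfl
      map_smul' := fun _ _ => rfl }
  have hinj : Injective restrict := by
    refine (injective_iff_map_eq_zero restrict).mpr fun M hM => Subtype.ext ?_
    obtain ⟨hsupp, hinv⟩ := (hS M).mp M.2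
    ext p q
    by_cases hpq : r p q
    · by_cases hp : half p
      · exact congrFun hM ⟨(p, q), hpq, hp⟩
      · show (M : Matrix ι ι R) p q = 0
        rw [← hinv]
        exact congrFun hM ⟨(τ p, τ q), (hr p q).mpr hpq, (hhalf p).mpr hp⟩
    · exact hsupp p q hpq
  have hsurj : Surjective restrict := by
    intro c
    let c' : Matrix ι ι R := fun p q => if h : r p q ∧ half p then c ⟨(p, q), h⟩ else 0
    have hmem : c' + c'.submatrix τ τ ∈ S := by
      refine (hS _).mpr ⟨fun p q hpq => ?_, fun p q => ?_⟩
      · have hτpq : ¬ r (τ p) (τ q) := (hr p q).not.mpr hpq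
        show c' p q + c' (τ p) (τ q) = 0
        simp [c', hpq, hτpq]
      · show c' (τ p) (τ q) + c' (τ (τ p)) (τ (τ q)) = c' p q + c' (τ p) (τ q)
        rw [hτ p, hτ q, add_comm]
    refine ⟨⟨_, hmem⟩, funext fun x => ?_⟩
    have hx : ¬ half (τ x.1.1) := (hhalf _).not_left.mpr x.2.2
    show c' x.1.1 x.1.2 + c' (τ x.1.1) (τ x.1.2) = c x
    simp [c', x.2, hx]
  rw [(LinearEquiv.ofBijective restrict ⟨hinj, hsurj⟩).finrank_eq,
    finrank_fintype_fun_eq_card, Nat.card_eq_fintype_card]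

omit [Fintype ι] in
theorem natCard_eq_two_mul_natCard [Finite ι] (hτ : Involutive τ)
    (hr : ∀ p q, r (τ p) (τ q) ↔ r p q) (hhalf : ∀ p, half (τ p) ↔ ¬ half p) :
    Nat.card {x : ι × ι // r x.1 x.2} =
      2 * Nat.card {x : ι × ι // r x.1 x.2 ∧ half x.1} := by
  have hswap : Nat.card {x : ι × ι // r x.1 x.2 ∧ ¬ half x.1}
      = Nat.card {x : ι × ι // r x.1 x.2 ∧ half x.1} :=
    Nat.card_congr <| (hτ.toPerm.prodCongr hτ.toPerm).subtypeEquiv fun x => by simp [hr, hhalf]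
  have hsplit : Nat.card {x : ι × ι // r x.1 x.2} =
      Nat.card {x : ι × ι // r x.1 x.2 ∧ half x.1} +
        Nat.card {x : ι × ι // r x.1 x.2 ∧ ¬ half x.1} := by
    classical
    have := Fintype.ofFinite ι
    simp only [Nat.card_eq_fintype_card, Fintype.card_subtype]
    rw [← Finset.card_filter_add_card_filter_not (p := fun x : ι × ι => half x.1),
      Finset.filter_filter, Finset.filter_filter]
  omega

end InvariantMatrices

section RootsOfUnityFilter

variable {K : Type*} [Field K]

theorem natCast_mul_natCard_eq_sum_range {ι : Type*} [Fintype ι] {N : ℕ} (μ : ι → K)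
    (hμ : ∀ i, μ i ^ N = 1) :
    (N * Nat.card {x : ι × ι // μ x.1 = μ x.2} : K) =
      ∑ m ∈ Finset.range N, (∑ p, μ p ^ m) * ∑ q, (μ q)⁻¹ ^ m := by
  classical
  rcases N.eq_zero_or_pos with rfl | hN
  · simp
  have hne : ∀ i, μ i ≠ 0 := fun i h => by simpa [h, hN.ne'] using hμ i
  have hpair : ∀ p q, ∑ m ∈ Finset.range N, (μ p * (μ q)⁻¹) ^ m
      = if μ p = μ q then (N : K) else 0 := fun p q => by
    split_ifs with h
    · simp [h, hne q]
    · rw [geom_sum_eq (by rwa [Ne, mul_inv_eq_one₀ (hne q)]), mul_pow, inv_pow, hμ, hμ]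
      simp
  calc (N * Nat.card {x : ι × ι // μ x.1 = μ x.2} : K)
      = ∑ x : ι × ι, if μ x.1 = μ x.2 then (N : K) else 0 := by
        simp [Finset.sum_ite, Nat.card_eq_fintype_card, Fintype.card_subtype, mul_comm]
    _ = ∑ p, ∑ q, ∑ m ∈ Finset.range N, (μ p * (μ q)⁻¹) ^ m := by
        simp [Fintype.sum_prod_type, hpair]
    _ = _ := by
        simp only [Finset.sum_mul_sum, mul_pow]
        exact (Finset.sum_congr rfl fun _ _ => Finset.sum_comm).trans Finset.sum_comm

end RootsOfUnityFilter

def TPowIndex : ℕ → Type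
  | 0 => Fin 2
  | j + 1 => TPowIndex j × Fin 2

namespace TPowIndex

instance instFintype : ∀ j, Fintype (TPowIndex j)
  | 0 => inferInstanceAs (Fintype (Fin 2))
  | j + 1 => @instFintypeProd _ _ (instFintype j) _

instance instDecidableEq : ∀ j, DecidableEq (TPowIndex j)
  | 0 => inferInstanceAs (DecidableEq (Fin 2))
  | j + 1 => @instDecidableEqProd _ _ (instDecidableEq j) _

def map (π : Fin 2 → Fin 2) : {j : ℕ} → TPowIndex j → TPowIndex j
  | 0, s => π s
  | _ + 1, (i, s) => (map π i, π s)

def prod {M : Type*} [CommMonoid M] (c : Fin 2 → M) : {j : ℕ} → TPowIndex j → M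
  | 0, s => c s
  | _ + 1, (i, s) => prod c i * c s

def last : {j : ℕ} → TPowIndex j → Fin 2
  | 0, s => s
  | _ + 1, (_, s) => s

theorem map_involutive {π : Fin 2 → Fin 2} (hπ : Involutive π) :
    ∀ {j : ℕ}, Involutive (map π : TPowIndex j → TPowIndex j)
  | 0, s => hπ s
  | _ + 1, (i, s) => Prod.ext (map_involutive hπ i) (hπ s)

theorem map_id : ∀ {j : ℕ} (i : TPowIndex j), map id i = i
  | 0, _ => rfl
  | _ + 1, (i, _) => Prod.ext (map_id i) rfl

theorem last_map (π : Fin 2 → Fin 2) :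
    ∀ {j : ℕ} (i : TPowIndex j), last (map π i) = π (last i)
  | 0, _ => rfl
  | _ + 1, _ => rfl

variable {M N : Type*} [CommMonoid M] [CommMonoid N]

theorem prod_map (c : Fin 2 → M) (π : Fin 2 → Fin 2) :
    ∀ {j : ℕ} (i : TPowIndex j), prod c (map π i) = prod (c ∘ π) i
  | 0, _ => rfl
  | _ + 1, (i, _) => congrArg (· * _) (prod_map c π i)

theorem map_prod {F : Type*} [FunLike F M N] [MonoidHomClass F M N] (φ : F) (c : Fin 2 → M) :
    ∀ {j : ℕ} (i : TPowIndex j), φ (prod c i) = prod (φ ∘ c) i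
  | 0, _ => rfl
  | _ + 1, (i, _) => by
    simp only [prod, _root_.map_mul, map_prod φ c i]
    rfl

theorem prod_const (a : M) : ∀ {j : ℕ} (i : TPowIndex j), prod (fun _ => a) i = a ^ (j + 1)
  | 0, _ => (pow_one a).symm
  | _ + 1, (i, _) => by rw [prod, prod_const a i, ← pow_succ]

theorem sum_prod {R : Type*} [CommSemiring R] (c : Fin 2 → R) :
    ∀ j : ℕ, ∑ i : TPowIndex j, prod c i = (∑ s, c s) ^ (j + 1)
  | 0 => (pow_one _).symm
  | j + 1 => by
    rw [pow_succ, ← sum_prod c j, Finset.sum_mul_sum]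
    exact Fintype.sum_prod_type _

end TPowIndex

def tpowBasis (b : Basis (Fin 2) ℂ V2) : (j : ℕ) → Basis (TPowIndex j) ℂ (TPow j)
  | 0 => b
  | j + 1 => (tpowBasis b j).tensorProduct b

theorem TPowRep_apply_tpowBasis {G : Subgroup (GL (Fin 2) ℂ)} (b : Basis (Fin 2) ℂ V2) {g : G}
    {c : Fin 2 → ℂ} {π : Fin 2 → Fin 2} (hg : ∀ s, stdRep G g (b s) = c s • b (π s)) :
    ∀ (j : ℕ) (i : TPowIndex j),
      TPowRep G j g (tpowBasis b j i) = TPowIndex.prod c i • tpowBasis b j (TPowIndex.map π i)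
  | 0, s => hg s
  | j + 1, (i, s) => by
    show ((TPowRep G j).tprod (stdRep G)) g ((tpowBasis b j).tensorProduct b (i, s)) =
      (TPowIndex.prod c i * c s) • (tpowBasis b j).tensorProduct b (TPowIndex.map π i, π s)
    rw [Basis.tensorProduct_apply, Basis.tensorProduct_apply, Representation.tprod_apply,
      TensorProduct.map_tmul, TPowRep_apply_tpowBasis b hg j i, hg s, TensorProduct.smul_tmul_smul]

theorem sum_range_two_mul_cos_pow {n : ℕ} (hn : 0 < n) (k : ℕ) :
    ∑ m ∈ Finset.range (2 * n), (2 * Real.cos (m * Real.pi / n)) ^ (2 * k) =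
      2 ^ (2 * k + 1) *
        (1 + ∑ m ∈ Finset.Icc 1 (n - 1), Real.cos (m * Real.pi / n) ^ (2 * k)) := by
  set f : ℕ → ℝ := fun m => Real.cos (m * Real.pi / n) ^ (2 * k)
  have hshift : ∀ m, f (n + m) = f m := fun m => by
    have : ((n + m : ℕ) : ℝ) * Real.pi / n = m * Real.pi / n + Real.pi := by
      push_cast
      field_simp
      ring
    simp only [f, this, Real.cos_add_pi, (even_two_mul k).neg_pow]
  have hhead : ∑ m ∈ Finset.range n, f m = 1 + ∑ m ∈ Finset.Icc 1 (n - 1), f m := by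
    obtain ⟨n', rfl⟩ := Nat.exists_eq_add_of_lt hn
    rw [Finset.range_eq_Ico, Finset.sum_eq_sum_Ico_succ_bot hn, ← Finset.Ico_add_one_right_eq_Icc]
    simp [f]
  simp_rw [mul_pow, ← Finset.mul_sum]
  rw [two_mul n, Finset.sum_range_add]
  simp only [hshift, hhead, f]
  ring

section Dicyclic

variable {n : ℕ} {X A : GL (Fin 2) ℂ} {G : Subgroup (GL (Fin 2) ℂ)}

/-- The basis `e₀, i • e₁`, in which `X` acts as `-i` times the swap of the two vectors. -/
def dicyclicBasis : Basis (Fin 2) ℂ V2 :=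
  (Pi.basisFun ℂ (Fin 2)).isUnitSMul (w := ![1, Complex.I]) fun s => by
    fin_cases s <;> simp [Complex.I_ne_zero]

def dicyclicEigen (n : ℕ) : Fin 2 → ℂ :=
  ![Complex.exp (Real.pi * Complex.I / n), Complex.exp (-(Real.pi * Complex.I / n))]

local notation "μ" => TPowIndex.prod (dicyclicEigen n)

theorem stdRep_apply_dicyclicBasis_of_eq_X
    (hX : (X : Matrix (Fin 2) (Fin 2) ℂ) = !![0, -1; 1, 0]) {g : G}
    (hg : (g : GL (Fin 2) ℂ) = X) (s : Fin 2) :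
    stdRep G g (dicyclicBasis s) = -Complex.I • dicyclicBasis (Fin.rev s) := by
  show Matrix.toLin' ((g : GL (Fin 2) ℂ) : Matrix (Fin 2) (Fin 2) ℂ) _ = _
  rw [hg, hX]
  fin_cases s <;> ext t <;> fin_cases t <;>
    simp [dicyclicBasis, Basis.isUnitSMul_apply, Matrix.mulVec, dotProduct, Fin.rev]

theorem stdRep_apply_dicyclicBasis_of_eq_A (hA : (A : Matrix (Fin 2) (Fin 2) ℂ) =
      !![Complex.exp (Real.pi * Complex.I / n), 0;
         0, Complex.exp (-(Real.pi * Complex.I / n))])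
    {g : G} (hg : (g : GL (Fin 2) ℂ) = A) (s : Fin 2) :
    stdRep G g (dicyclicBasis s) = dicyclicEigen n s • dicyclicBasis s := by
  show Matrix.toLin' ((g : GL (Fin 2) ℂ) : Matrix (Fin 2) (Fin 2) ℂ) _ = _
  rw [hg, hA]
  fin_cases s <;> ext t <;> fin_cases t <;>
    simp [dicyclicBasis, Basis.isUnitSMul_apply, dicyclicEigen, Matrix.mulVec, dotProduct,
      mul_comm]

theorem dicyclicEigen_rev (s : Fin 2) : dicyclicEigen n (Fin.rev s) = (dicyclicEigen n s)⁻¹ := by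
  fin_cases s <;> simp [dicyclicEigen, ← Complex.exp_neg]

theorem prod_dicyclicEigen_map_rev {j : ℕ} (i : TPowIndex j) :
    μ (TPowIndex.map Fin.rev i) = (μ i)⁻¹ := by
  rw [TPowIndex.prod_map, ← invMonoidHom_apply, TPowIndex.map_prod]
  exact congrArg (TPowIndex.prod · i) (funext dicyclicEigen_rev)

theorem two_mul_finrank_equivEnd_eq_natCard
    (hX : (X : Matrix (Fin 2) (Fin 2) ℂ) = !![0, -1; 1, 0])
    (hA : (A : Matrix (Fin 2) (Fin 2) ℂ) =
      !![Complex.exp (Real.pi * Complex.I / n), 0;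
         0, Complex.exp (-(Real.pi * Complex.I / n))]) (j : ℕ) :
    2 * finrank ℂ (equivEnd (TPowRep (Subgroup.closure {X, A}) j)) =
      Nat.card {x : TPowIndex j × TPowIndex j // μ x.1 = μ x.2} := by
  have hτ : Involutive (TPowIndex.map Fin.rev : TPowIndex j → TPowIndex j) :=
    TPowIndex.map_involutive Fin.rev_involutive
  have hr : ∀ p q : TPowIndex j,
      μ (TPowIndex.map Fin.rev p) = μ (TPowIndex.map Fin.rev q) ↔ μ p = μ q :=
    fun p q => by simp [prod_dicyclicEigen_map_rev]
  have hhalf : ∀ p : TPowIndex j,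
      TPowIndex.last (TPowIndex.map Fin.rev p) = 0 ↔ ¬ TPowIndex.last p = 0 := fun p => by
    rw [TPowIndex.last_map]
    generalize p.last = s
    fin_cases s <;> decide
  let e := LinearMap.toMatrixAlgEquiv (tpowBasis dicyclicBasis j)
  rw [natCard_eq_two_mul_natCard (r := fun p q => μ p = μ q)
      (half := fun p => TPowIndex.last p = 0) hτ hr hhalf, ← e.toLinearEquiv.finrank_map_eq,
    finrank_eq_natCard_of_mem_iff (r := fun p q => μ p = μ q)
      (half := fun p => TPowIndex.last p = 0) hτ hr hhalf fun M => ?_]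
  rw [Submodule.mem_map_equiv, mem_equivEnd_closure_pair_iff, and_comm,
    ← commute_map_iff e.injective, ← commute_map_iff e.injective]
  have hXmat : e (TPowRep (Subgroup.closure {X, A}) j ⟨X, Subgroup.subset_closure (by simp)⟩) =
      monomialMatrix (TPowIndex.map Fin.rev) fun _ => (-Complex.I) ^ (j + 1) :=
    LinearMap.toMatrixAlgEquiv_eq_monomialMatrix _ fun q => by
      rw [TPowRep_apply_tpowBasis dicyclicBasis (stdRep_apply_dicyclicBasis_of_eq_X hX rfl),
        TPowIndex.prod_const]
  have hAmat : e (TPowRep (Subgroup.closure {X, A}) j ⟨A, Subgroup.subset_closure (by simp)⟩) =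
      monomialMatrix id μ :=
    LinearMap.toMatrixAlgEquiv_eq_monomialMatrix _ fun q => by
      rw [TPowRep_apply_tpowBasis dicyclicBasis (π := id)
        (stdRep_apply_dicyclicBasis_of_eq_A hA rfl), TPowIndex.map_id, id]
  rw [show e ((e : _ ≃ₗ[ℂ] _).symm M) = M from e.apply_symm_apply M, hXmat, hAmat,
    commute_monomialMatrix_id_iff, commute_monomialMatrix_const_iff hτ (by simp)]

theorem sum_prod_dicyclicEigen_pow (j m : ℕ) :
    ∑ p : TPowIndex j, μ p ^ m = ((2 * Real.cos (m * Real.pi / n) : ℝ) : ℂ) ^ (j + 1) := by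
  simp_rw [← powMonoidHom_apply, TPowIndex.map_prod, TPowIndex.sum_prod]
  congr 1
  simp only [Fin.sum_univ_two, Function.comp_apply, powMonoidHom_apply, dicyclicEigen,
    Matrix.cons_val_zero, Matrix.cons_val_one, ← Complex.exp_nat_mul]
  push_cast
  rw [Complex.two_cos]
  congr 2 <;> ring

theorem natCast_mul_natCard_eq_sum_cos (j : ℕ) :
    (2 * n * Nat.card {x : TPowIndex j × TPowIndex j // μ x.1 = μ x.2} : ℝ) =
      ∑ m ∈ Finset.range (2 * n), (2 * Real.cos (m * Real.pi / n)) ^ (2 * (j + 1)) := by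
  have hroot : ∀ p : TPowIndex j, μ p ^ (2 * n) = 1 := fun p => by
    rcases n.eq_zero_or_pos with rfl | hn
    · simp
    have hs : powMonoidHom (2 * n) ∘ dicyclicEigen n = fun _ => 1 := funext fun s => by
      have hn' : (n : ℂ) ≠ 0 := by exact_mod_cast hn.ne'
      have h : 2 * n * (Real.pi * Complex.I) / n = 2 * Real.pi * Complex.I := by field_simp
      fin_cases s <;>
        simp [dicyclicEigen, ← Complex.exp_nat_mul, mul_div_assoc', h, Complex.exp_neg]
    rw [← powMonoidHom_apply, TPowIndex.map_prod, hs, TPowIndex.prod_const, one_pow]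
  have hinv : ∀ m, ∑ q : TPowIndex j, (μ q)⁻¹ ^ m = ∑ q : TPowIndex j, μ q ^ m := by
    intro m
    simp_rw [← prod_dicyclicEigen_map_rev]
    exact Equiv.sum_comp (TPowIndex.map_involutive Fin.rev_involutive).toPerm (μ · ^ m)
  have := natCast_mul_natCard_eq_sum_range _ hroot
  simp only [hinv, sum_prod_dicyclicEigen_pow, ← pow_two, ← pow_mul'] at this
  exact_mod_cast this

end Dicyclic

theorem dim_equivEnd_tensorPower_dicyclic_closed_formula
    (n : ℕ) (hn : 1 ≤ n) (X A : GL (Fin 2) ℂ)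
    (hX : (X : Matrix (Fin 2) (Fin 2) ℂ) = !![0, -1; 1, 0])
    (hA : (A : Matrix (Fin 2) (Fin 2) ℂ) =
      !![Complex.exp (Real.pi * Complex.I / n), 0;
         0, Complex.exp (-(Real.pi * Complex.I / n))])
    (G : Subgroup (GL (Fin 2) ℂ)) (hG : G = Subgroup.closure {X, A})
    (k : ℕ) (hk : 1 ≤ k) :
    (Module.finrank ℂ (equivEnd (TPowRep G (k - 1))) : ℝ) =
      2 ^ (2 * k + 1) / (4 * n) *
        (1 + ∑ m ∈ Finset.Icc 1 (n - 1), Real.cos (m * Real.pi / n) ^ (2 * k)) := by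
  subst hG
  obtain ⟨j, rfl⟩ := Nat.exists_eq_add_of_le' hk
  have hcount := natCast_mul_natCard_eq_sum_cos (n := n) j
  rw [sum_range_two_mul_cos_pow hn, ← two_mul_finrank_equivEnd_eq_natCard hX hA] at hcount
  rw [Nat.add_sub_cancel, div_mul_eq_mul_div, eq_div_iff (by positivity)]
  push_cast at hcount
  linear_combination hcount
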